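/- arXiv:1409.6828 — 2 statements merged into one kernel-verified Lean document; each statement's English description precedes it below -/
import Mathlib

section
/- (Lemma 4) Let G be a connected simple graph on N ≥ 2 vertices with biased random walk matrix P^B, and let (h_v) be a family of hitting-time solutions. Then any meeting-time solution m for the paired process X satisfies m(x,y) < 4 · max_{u,v} h_v(u) for all vertices x, y; that is, the meeting time of two walkers following the paired process X is less than 4 times the maximal hitting time H(G) of the biased random walk. -/
/-!
`P^B` is symmetric and stochastic, so the biased walk is reversible with uniform stationary
distribution. Reversibility makes `H(a, b) - H̄(b)` symmetric in `a, b`, where `H̄(b)` is the mean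
hitting time of `b` from a uniform start. Hence `g(a, b) = H(a, b) - H̄(b) + 2K`, with
`K = max H ≥ 1`, is symmetric and in each variable a hitting-time function up to a constant, so
it satisfies the meeting-time equation with `1` replaced by a quantity `≥ 2`, and it is
nonnegative on the diagonal. A minimum principle for the paired process then gives
`m ≤ g ≤ 3K < 4K`.
-/

/-- The biased random walk transition matrix `P^B` of a graph `G` on `Fin N`:
`P^B i j = (1/N)(1/deg i + 1/deg j)` for edges, `P^B i i = 1 - 1/N - ∑_{k ∈ N_i} 1/(N deg k)`,
and `0` otherwise. -/
noncomputable def PB {N : ℕ} (G : SimpleGraph (Fin N)) [DecidableRel G.Adj]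
    (i j : Fin N) : ℝ :=
  if i = j then
    1 - 1 / (N : ℝ) - ∑ k ∈ G.neighborFinset i, 1 / ((N : ℝ) * (G.degree k : ℝ))
  else if G.Adj i j then
    (1 / (N : ℝ)) * (1 / (G.degree i : ℝ) + 1 / (G.degree j : ℝ))
  else 0

open Finset Matrix

/-- `h v x` is the hitting time of the target `v` from `x`. -/
structure IsHittingTimes {ι : Type*} [Fintype ι] (P : Matrix ι ι ℝ) (h : ι → ι → ℝ) : Prop where
  apply_self : ∀ v, h v v = 0
  apply_of_ne : ∀ v x, x ≠ v → h v x = 1 + ∑ z, P x z * h v z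

/-- For `x ≠ y`, `meetingDefect P m x y = 1` is the meeting-time equation with the self-loop
terms `P x x * m x y` and `P y y * m x y` moved inside the sums. -/
def meetingDefect {ι : Type*} [Fintype ι] [DecidableEq ι] (P : Matrix ι ι ℝ)
    (f : ι → ι → ℝ) (a b : ι) : ℝ :=
  (2 - P a b) * f a b - ∑ z ∈ univ.erase b, P a z * f z b - ∑ z ∈ univ.erase a, P b z * f a z

section Markov

variable {ι : Type*} [Fintype ι] [DecidableEq ι] {P : Matrix ι ι ℝ} {h : ι → ι → ℝ}

namespace IsHittingTimes

theorem nonneg (hP : P ∈ rowStochastic ℝ ι) (hh : IsHittingTimes P h) (v u : ι) :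
    0 ≤ h v u := by
  have : Nonempty ι := ⟨v⟩
  obtain ⟨q, hq⟩ := Finite.exists_min (h v)
  refine le_trans ?_ (hq u)
  by_contra! hneg
  have hqv : q ≠ v := by rintro rfl; exact hneg.ne (hh.apply_self q)
  have hmean : h v q ≤ ∑ z, P q z * h v z :=
    calc h v q = ∑ z, P q z * h v q := by rw [← sum_mul, sum_row_of_mem_rowStochastic hP, one_mul]
      _ ≤ ∑ z, P q z * h v z :=
        sum_le_sum fun z _ => mul_le_mul_of_nonneg_left (hq z) (nonneg_of_mem_rowStochastic hP)
  linarith [hh.apply_of_ne v q hqv]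

theorem one_le_of_ne (hP : P ∈ rowStochastic ℝ ι) (hh : IsHittingTimes P h) {v x : ι}
    (hxv : x ≠ v) : 1 ≤ h v x := by
  rw [hh.apply_of_ne v x hxv, le_add_iff_nonneg_right]
  exact sum_nonneg fun z _ => mul_nonneg (nonneg_of_mem_rowStochastic hP) (hh.nonneg hP v z)

/-- At the target, the identity is Kac's formula for the uniform stationary distribution. -/
theorem sum_mul_eq (hcol : ∀ j, ∑ i, P i j = 1) (hh : IsHittingTimes P h) (v q : ι) :
    ∑ z, P q z * h v z = h v q - 1 + if q = v then (Fintype.card ι : ℝ) else 0 := by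
  split_ifs with hqv
  · subst hqv
    have hswap : ∑ x, ∑ z, P x z * h q z = ∑ z, h q z := by
      rw [sum_comm]
      exact sum_congr rfl fun z _ => by rw [← sum_mul, hcol z, one_mul]
    have htotal : ∑ x, (h q x - ∑ z, P x z * h q z) = 0 := by
      rw [sum_sub_distrib, hswap, sub_self]
    have hoff : ∀ x ∈ univ.erase q, h q x - ∑ z, P x z * h q z = 1 := fun x hx => by
      rw [hh.apply_of_ne q x (ne_of_mem_erase hx)]
      ring
    rw [← add_sum_erase _ _ (mem_univ q), sum_congr rfl hoff, sum_const,
      card_erase_of_mem (mem_univ q), card_univ, nsmul_one,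
      Nat.cast_pred (Fintype.card_pos_iff.2 ⟨q⟩), hh.apply_self] at htotal
    linarith [hh.apply_self q]
  · linarith [hh.apply_of_ne v q hqv]

theorem sub_mean_comm (hPs : P.IsSymm) (hcol : ∀ j, ∑ i, P i j = 1) (hh : IsHittingTimes P h)
    (u v : ι) :
    h v u - (∑ t, h v t) / Fintype.card ι = h u v - (∑ t, h u t) / Fintype.card ι := by
  have hreversible : h v ⬝ᵥ (P *ᵥ h u) = h u ⬝ᵥ (P *ᵥ h v) := by
    rw [dotProduct_mulVec, ← mulVec_transpose, hPs.eq, dotProduct_comm]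
  have hexpand : ∀ a b, h a ⬝ᵥ (P *ᵥ h b) =
      h a ⬝ᵥ h b - ∑ t, h a t + Fintype.card ι * h a b := by
    intro a b
    simp only [dotProduct, mulVec, hh.sum_mul_eq hcol, mul_add, mul_sub, mul_one, mul_ite,
      mul_zero, sum_add_distrib, sum_sub_distrib, sum_ite_eq', mem_univ, if_true]
    ring
  rw [hexpand, hexpand, dotProduct_comm (h v)] at hreversible
  have hcard : (Fintype.card ι : ℝ) ≠ 0 := by
    exact_mod_cast (Fintype.card_pos_iff.2 ⟨u⟩).ne'
  field_simp
  linarith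

end IsHittingTimes

theorem meetingDefect_sub (f g : ι → ι → ℝ) (a b : ι) :
    meetingDefect P (f - g) a b = meetingDefect P f a b - meetingDefect P g a b := by
  simp only [meetingDefect, Pi.sub_apply, mul_sub, sum_sub_distrib]
  ring

/-- Minimum principle for the paired process: at a negative minimum off the diagonal the defect
is at most `P b a` times that minimum. -/
theorem nonneg_of_meetingDefect_pos (hP : P ∈ rowStochastic ℝ ι) {f : ι → ι → ℝ}
    (hdiag : ∀ a, 0 ≤ f a a) (hdef : ∀ a b, a ≠ b → 0 < meetingDefect P f a b) (x y : ι) :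
    0 ≤ f x y := by
  have : Nonempty ι := ⟨x⟩
  obtain ⟨⟨a, b⟩, hmin⟩ := Finite.exists_min (Function.uncurry f)
  refine le_trans ?_ (hmin (x, y))
  by_contra! hneg
  have hab : a ≠ b := by rintro rfl; exact hneg.not_ge (hdiag a)
  have hlower : ∀ c d, (1 - P c d) * f a b = ∑ z ∈ univ.erase d, P c z * f a b := fun c d => by
    rw [← sum_mul, sum_erase_eq_sub (mem_univ d), sum_row_of_mem_rowStochastic hP]
  have h₁ : (1 - P a b) * f a b ≤ ∑ z ∈ univ.erase b, P a z * f z b :=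
    (hlower a b).trans_le <| sum_le_sum fun z _ =>
      mul_le_mul_of_nonneg_left (hmin (z, b)) (nonneg_of_mem_rowStochastic hP)
  have h₂ : (1 - P b a) * f a b ≤ ∑ z ∈ univ.erase a, P b z * f a z :=
    (hlower b a).trans_le <| sum_le_sum fun z _ =>
      mul_le_mul_of_nonneg_left (hmin (a, z)) (nonneg_of_mem_rowStochastic hP)
  have hPba : P b a * f a b ≤ 0 :=
    mul_nonpos_of_nonneg_of_nonpos (nonneg_of_mem_rowStochastic hP) hneg.le
  have := hdef a b hab
  unfold meetingDefect at this
  linarith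

theorem meetingDefect_eq_of_sum_mul (hPs : P.IsSymm) {f : ι → ι → ℝ}
    (hf : ∀ a b, a ≠ b → ∑ z, P a z * f z b = f a b - 1) (hfs : ∀ a b, f a b = f b a)
    {a b : ι} (hab : a ≠ b) :
    meetingDefect P f a b = 2 + P a b * (f a a + f b b - f a b) := by
  have h₁ := hf a b hab
  have h₂ : ∑ z, P b z * f a z = f a b - 1 := by
    simp only [hfs a]
    rw [hf b a hab.symm, hfs]
  unfold meetingDefect
  rw [sum_erase_eq_sub (mem_univ b), sum_erase_eq_sub (mem_univ a), h₁, h₂, hPs.apply a b]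
  ring

theorem IsHittingTimes.meeting_le_three_mul (hP : P ∈ rowStochastic ℝ ι) (hPs : P.IsSymm)
    (hh : IsHittingTimes P h) {K : ℝ} (hK : ∀ u v, h v u ≤ K) {m : ι → ι → ℝ}
    (hm0 : ∀ a, m a a = 0) (hm : ∀ a b, a ≠ b → meetingDefect P m a b = 1) (x y : ι) :
    m x y ≤ 3 * K := by
  have hcol : ∀ j, ∑ i, P i j = 1 := fun j =>
    (sum_congr rfl fun i _ => hPs.apply j i).trans (sum_row_of_mem_rowStochastic hP j)
  have hcard : (0 : ℝ) < Fintype.card ι := by exact_mod_cast Fintype.card_pos_iff.2 ⟨x⟩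
  set mean : ι → ℝ := fun b => (∑ t, h b t) / Fintype.card ι
  have hmean_nonneg : ∀ b, 0 ≤ mean b := fun b =>
    div_nonneg (sum_nonneg fun t _ => hh.nonneg hP b t) hcard.le
  have hmean_le : ∀ b, mean b ≤ K := fun b => by
    rw [div_le_iff₀ hcard, mul_comm, ← nsmul_eq_mul, ← card_univ]
    exact sum_le_card_nsmul _ _ _ fun t _ => hK t b
  set g : ι → ι → ℝ := fun a b => h b a - mean b + 2 * K
  have hg_symm : ∀ a b, g a b = g b a := fun a b => by
    simp only [g, mean, hh.sub_mean_comm hPs hcol a b]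
  have hg_step : ∀ a b, a ≠ b → ∑ z, P a z * g z b = g a b - 1 := fun a b hab => by
    simp only [g, mul_add, mul_sub, sum_add_distrib, sum_sub_distrib, ← sum_mul,
      sum_row_of_mem_rowStochastic hP, one_mul]
    rw [hh.apply_of_ne b a hab]
    ring
  have hg_diag : ∀ a, g a a = 2 * K - mean a := fun a => by simp only [g, hh.apply_self]; ring
  have hg_defect : ∀ a b, a ≠ b → 1 < meetingDefect P g a b := fun a b hab => by
    have htriangle : 0 ≤ g a a + g b b - g a b := by
      simp only [hg_diag, g]; linarith [hmean_le a, hK a b]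
    rw [meetingDefect_eq_of_sum_mul hPs hg_step hg_symm hab]
    nlinarith [mul_nonneg (nonneg_of_mem_rowStochastic hP (i := a) (j := b)) htriangle]
  have hm_le_g : 0 ≤ (g - m) x y := by
    refine nonneg_of_meetingDefect_pos hP (fun a => ?_) (fun a b hab => ?_) x y
    · simp only [Pi.sub_apply, hm0, sub_zero, hg_diag]; linarith [hmean_le a, hmean_nonneg a]
    · rw [meetingDefect_sub]; linarith [hg_defect a b hab, hm a b hab]
  simp only [Pi.sub_apply, g] at hm_le_g
  linarith [hK x y, hmean_nonneg y]

end Markov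

section BiasedWalk

variable {N : ℕ} (G : SimpleGraph (Fin N)) [DecidableRel G.Adj]

theorem PB_isSymm : Matrix.IsSymm (PB G) :=
  IsSymm.ext fun i j => by
    unfold PB
    by_cases hij : i = j
    · subst hij; rfl
    · simp only [if_neg hij, if_neg (Ne.symm hij), G.adj_comm j i]
      split_ifs <;> ring

theorem PB_eq_zero_of_not_adj {i j : Fin N} (hij : i ≠ j) (hadj : ¬G.Adj i j) : PB G i j = 0 := by
  simp [PB, hij, hadj]

theorem PB_self (x : Fin N) :
    PB G x x = 1 - 1 / (N : ℝ) - ∑ k ∈ G.neighborFinset x, 1 / ((N : ℝ) * (G.degree k : ℝ)) :=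
  if_pos rfl

theorem PB_nonneg (i j : Fin N) : 0 ≤ PB G i j := by
  unfold PB
  split_ifs
  · have hN : (0 : ℝ) < N := by exact_mod_cast i.pos
    have hterm : ∀ k ∈ G.neighborFinset i, 1 / ((N : ℝ) * G.degree k) ≤ 1 / N := fun k hk => by
      have hk : (1 : ℝ) ≤ G.degree k := by
        exact_mod_cast (G.degree_pos_iff_exists_adj k).2 ⟨i, ((G.mem_neighborFinset i k).1 hk).symm⟩
      exact one_div_le_one_div_of_le hN (le_mul_of_one_le_right hN.le hk)
    have hsum := sum_le_sum hterm
    rw [sum_const, G.card_neighborFinset_eq_degree, nsmul_eq_mul] at hsum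
    have hdeg : (G.degree i : ℝ) + 1 ≤ N := by
      have := G.degree_lt_card_verts i
      rw [Fintype.card_fin] at this
      exact_mod_cast this
    have : ((G.degree i : ℝ) + 1) * (1 / N) ≤ 1 := by
      rw [mul_one_div]
      exact (div_le_one hN).2 hdeg
    linarith
  · positivity
  · rfl

theorem sum_PB_mul (x : Fin N) (f : Fin N → ℝ) :
    ∑ z, PB G x z * f z = PB G x x * f x + ∑ i ∈ G.neighborFinset x, PB G x i * f i := by
  calc ∑ z, PB G x z * f z = ∑ z ∈ insert x (G.neighborFinset x), PB G x z * f z := by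
        refine (sum_subset (subset_univ _) fun z _ hz => ?_).symm
        rw [mem_insert, not_or, G.mem_neighborFinset] at hz
        rw [PB_eq_zero_of_not_adj G (Ne.symm hz.1) hz.2, zero_mul]
    _ = _ := sum_insert (G.notMem_neighborFinset_self x)

theorem sum_neighborFinset_PB {x : Fin N} (hx : 0 < G.degree x) :
    ∑ i ∈ G.neighborFinset x, PB G x i = 1 - PB G x x := by
  have hedge : ∀ i ∈ G.neighborFinset x,
      PB G x i = 1 / (N * G.degree x) + 1 / ((N : ℝ) * G.degree i) := fun i hi => by
    have hadj := (G.mem_neighborFinset x i).1 hi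
    simp only [PB, if_neg hadj.ne, if_pos hadj]
    ring
  have hx' : (G.degree x : ℝ) ≠ 0 := by exact_mod_cast hx.ne'
  rw [sum_congr rfl hedge, sum_add_distrib, sum_const, G.card_neighborFinset_eq_degree,
    nsmul_eq_mul, PB_self]
  field_simp
  ring

theorem PB_mem_rowStochastic (hdeg : ∀ v, 0 < G.degree v) : PB G ∈ rowStochastic ℝ (Fin N) := by
  refine mem_rowStochastic_iff_sum.2 ⟨PB_nonneg G, fun x => ?_⟩
  have := sum_PB_mul G x fun _ => 1
  simp only [mul_one] at this
  rw [this, sum_neighborFinset_PB G (hdeg x)]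
  ring

theorem sum_erase_neighborFinset_PB_mul {x y : Fin N} (hxy : x ≠ y) (f : Fin N → ℝ) :
    ∑ i ∈ (G.neighborFinset x).erase y, PB G x i * f i =
      ∑ z ∈ univ.erase y, PB G x z * f z - PB G x x * f x := by
  rw [sum_erase_eq_sub (mem_univ y), sum_PB_mul]
  by_cases hadj : G.Adj x y
  · rw [sum_erase_eq_sub ((G.mem_neighborFinset x y).2 hadj)]
    ring
  · rw [erase_eq_of_notMem (by rwa [G.mem_neighborFinset]), PB_eq_zero_of_not_adj G hxy hadj]
    ring

theorem meetingDefect_PB_eq_one (hdeg : ∀ v, 0 < G.degree v) {m : Fin N → Fin N → ℝ}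
    {x y : Fin N} (hxy : x ≠ y)
    (hm : ((∑ i ∈ G.neighborFinset x, PB G x i) + (∑ j ∈ G.neighborFinset y, PB G y j)
          - PB G x y) * m x y
        = 1 + (∑ i ∈ (G.neighborFinset x).erase y, PB G x i * m i y)
            + (∑ j ∈ (G.neighborFinset y).erase x, PB G y j * m x j)) :
    meetingDefect (PB G) m x y = 1 := by
  rw [sum_neighborFinset_PB G (hdeg x), sum_neighborFinset_PB G (hdeg y),
    sum_erase_neighborFinset_PB_mul G hxy fun i => m i y,
    sum_erase_neighborFinset_PB_mul G hxy.symm fun j => m x j] at hm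
  unfold meetingDefect
  linear_combination hm

end BiasedWalk

theorem meeting_time_lt_four_hitting_general {N : ℕ} (hN : 2 ≤ N)
    (G : SimpleGraph (Fin N)) [DecidableRel G.Adj] (hconn : G.Connected)
    (h : Fin N → Fin N → ℝ) (h0 : ∀ v, h v v = 0)
    (hrec : ∀ v x, x ≠ v → h v x = 1 + ∑ z, PB G x z * h v z)
    (m : Fin N → Fin N → ℝ)
    (hdiag : ∀ x, m x x = 0)
    (hm : ∀ x y, x ≠ y →
      ((∑ i ∈ G.neighborFinset x, PB G x i) + (∑ j ∈ G.neighborFinset y, PB G y j)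
          - PB G x y) * m x y
        = 1 + (∑ i ∈ (G.neighborFinset x).erase y, PB G x i * m i y)
            + (∑ j ∈ (G.neighborFinset y).erase x, PB G y j * m x j)) :
    ∀ x y, m x y <
      4 * Finset.univ.sup' ⟨(x, y), Finset.mem_univ _⟩
        (fun p : Fin N × Fin N => h p.2 p.1) := by
  intro x y
  have : Nontrivial (Fin N) := Fin.nontrivial_iff_two_le.2 hN
  have hdeg : ∀ v, 0 < G.degree v := fun v =>
    hconn.preconnected.degree_pos_of_nontrivial v
  have hP := PB_mem_rowStochastic G hdeg
  have hh : IsHittingTimes (PB G) h := ⟨h0, hrec⟩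
  set K := Finset.univ.sup' ⟨(x, y), Finset.mem_univ _⟩ fun p : Fin N × Fin N => h p.2 p.1
  have hK : ∀ u v, h v u ≤ K := fun u v =>
    le_sup' (fun p : Fin N × Fin N => h p.2 p.1) (mem_univ (u, v))
  obtain ⟨u, v, huv⟩ := exists_pair_ne (Fin N)
  have hK_pos : 0 < K := one_pos.trans_le ((hh.one_le_of_ne hP huv).trans (hK u v))
  have hm_le := hh.meeting_le_three_mul hP (PB_isSymm G) hK hdiag
    (fun a b hab => meetingDefect_PB_eq_one G hdeg hab (hm a b hab)) x y
  linarith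

/-- Lemma 4: for a connected simple graph on `N ≥ 2` vertices with a
family `h` of hitting-time solutions of the biased random walk (`h v u = H(u, v)`),
any meeting-time solution `m` for the paired process `X` satisfies
`m x y < 4 · max_{u,v} H(u,v)`, i.e. the meeting time of two walkers following the
paired process is less than `4` times the maximal hitting time `H(G)`. -/
theorem meeting_time_lt_four_hitting {N : ℕ} (hN : 2 ≤ N)
    (G : SimpleGraph (Fin N)) [DecidableRel G.Adj] (hconn : G.Connected)
    (h : Fin N → Fin N → ℝ) (h0 : ∀ v, h v v = 0)
    (hrec : ∀ v x, x ≠ v → h v x = 1 + ∑ z, PB G x z * h v z)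
    (m : Fin N → Fin N → ℝ)
    (hsym : ∀ x y, m x y = m y x) (hdiag : ∀ x, m x x = 0)
    (hm : ∀ x y, x ≠ y →
      ((∑ i ∈ G.neighborFinset x, PB G x i) + (∑ j ∈ G.neighborFinset y, PB G y j)
          - PB G x y) * m x y
        = 1 + (∑ i ∈ (G.neighborFinset x).erase y, PB G x i * m i y)
            + (∑ j ∈ (G.neighborFinset y).erase x, PB G y j * m x j)) :
    ∀ x y, m x y <
      4 * Finset.univ.sup' ⟨(x, y), Finset.mem_univ _⟩
        (fun p : Fin N × Fin N => h p.2 p.1) :=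
  meeting_time_lt_four_hitting_general hN G hconn h h0 hrec m hdiag hm
end

section
/- Let G be a connected simple graph on N ≥ 2 vertices with biased random walk matrix P^B. Then any meeting-time solution m for the paired process X satisfies m(x,y) < 12N³ for all vertices x, y. -/
open Finset SimpleGraph Matrix

section Graph

variable {V : Type*} {G : SimpleGraph V}

lemma SimpleGraph.Connected.exists_adj_dist_lt (hconn : G.Connected) {u w : V} (huw : u ≠ w) :
    ∃ v, G.Adj u v ∧ G.dist v w < G.dist u w := by
  obtain ⟨p, hp⟩ := hconn.exists_walk_length_eq_dist u w
  cases p with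
  | nil => exact absurd rfl huw
  | cons hadj q =>
    refine ⟨_, hadj, ?_⟩
    have := dist_le q
    rw [Walk.length_cons] at hp
    omega

lemma SimpleGraph.Preconnected.eq_of_forall_adj {α : Type*} (hconn : G.Preconnected) {f : V → α}
    (hf : ∀ u v, G.Adj u v → f u = f v) (u v : V) : f u = f v := by
  obtain ⟨p⟩ := hconn u v
  induction p with
  | nil => rfl
  | cons hadj _ ih => exact (hf _ _ hadj).trans ih

lemma SimpleGraph.Walk.dist_getVert_getVert {u v : V} {w : G.Walk u v}
    (hw : w.length = G.dist u v) {i j : ℕ} (hij : i ≤ j) (hj : j ≤ w.length) :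
    G.dist (w.getVert i) (w.getVert j) = j - i := by
  have h := length_eq_dist_of_subwalk hw ((isSubwalk_drop (w.take j) i).trans (w.isSubwalk_take j))
  simp only [drop_length, take_length, take_getVert] at h
  rwa [min_eq_left hj, min_eq_right hij, eq_comm] at h

variable [DecidableRel G.Adj]

/-- Two vertices of a geodesic adjacent to `u` are at distance at most `2`, hence at most two
steps apart along it. -/
lemma SimpleGraph.Walk.card_filter_adj_getVert_le {x y : V} {w : G.Walk x y}
    (hw : w.length = G.dist x y) (u : V) :
    #{t ∈ range (w.length + 1) | G.Adj u (w.getVert t)} ≤ 3 := by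
  set T := {t ∈ range (w.length + 1) | G.Adj u (w.getVert t)}
  rcases T.eq_empty_or_nonempty with hT | hT
  · simp [hT]
  have hsub : T ⊆ Icc (T.min' hT) (T.min' hT + 2) := by
    intro t ht
    have hmin := T.min'_mem hT
    have hle := T.min'_le t ht
    simp only [T, mem_filter, mem_range] at ht hmin
    have h2 := dist_le ((Walk.nil.cons ht.2).cons hmin.2.symm)
    rw [dist_getVert_getVert hw hle (by omega)] at h2
    simp only [length_cons, length_nil] at h2
    rw [mem_Icc]
    omega
  have := card_le_card hsub
  simp only [Nat.card_Icc] at this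
  omega

lemma SimpleGraph.Walk.sum_degree_getVert_le [Fintype V] {x y : V} {w : G.Walk x y}
    (hw : w.length = G.dist x y) :
    ∑ t ∈ range (w.length + 1), G.degree (w.getVert t) ≤ 3 * Fintype.card V := by
  calc ∑ t ∈ range (w.length + 1), G.degree (w.getVert t)
      = ∑ t ∈ range (w.length + 1), ∑ u, if G.Adj u (w.getVert t) then 1 else 0 := by
        refine sum_congr rfl fun t _ => ?_
        rw [← card_neighborFinset_eq_degree, neighborFinset_eq_filter, card_filter]
        simp only [adj_comm]
    _ = ∑ u, #{t ∈ range (w.length + 1) | G.Adj u (w.getVert t)} := by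
        rw [sum_comm]; simp only [card_filter]
    _ ≤ ∑ _u : V, 3 := sum_le_sum fun u _ => card_filter_adj_getVert_le hw u
    _ = 3 * Fintype.card V := by simp [mul_comm]

end Graph

structure IsSymmetricWalk {V : Type*} [Fintype V] (G : SimpleGraph V) (P : Matrix V V ℝ) :
    Prop where
  symm : ∀ u v, P u v = P v u
  sum_row : ∀ u, ∑ v, P u v = 1
  eq_zero : ∀ u v, u ≠ v → ¬G.Adj u v → P u v = 0
  pos : ∀ u v, G.Adj u v → 0 < P u v

section SymmetricWalk

variable {V : Type*} [Fintype V] {G : SimpleGraph V} {P : Matrix V V ℝ}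

lemma IsSymmetricWalk.nonneg (hP : IsSymmetricWalk G P) {u v : V} (huv : u ≠ v) : 0 ≤ P u v := by
  by_cases h : G.Adj u v
  · exact (hP.pos u v h).le
  · exact (hP.eq_zero u v huv h).ge

lemma sum_neighborFinset_mul_of_eq_zero [DecidableEq V] [DecidableRel G.Adj] {u : V}
    (hP : ∀ v, u ≠ v → ¬G.Adj u v → P u v = 0) (g : V → ℝ) :
    ∑ v ∈ G.neighborFinset u, P u v * g v = ∑ v, P u v * g v - P u u * g u := by
  rw [eq_sub_iff_add_eq, ← sum_erase_add _ _ (mem_univ u)]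
  congr 1
  refine sum_subset (fun v hv => ?_) (fun v hv hvn => ?_)
  · simpa using ((G.mem_neighborFinset u v).mp hv).ne'
  · rw [hP v (Ne.symm (ne_of_mem_erase hv)) (by simpa using hvn), zero_mul]

lemma IsSymmetricWalk.sum_neighborFinset [DecidableEq V] [DecidableRel G.Adj]
    (hP : IsSymmetricWalk G P) (u : V) : ∑ v ∈ G.neighborFinset u, P u v = 1 - P u u := by
  simpa [hP.sum_row] using sum_neighborFinset_mul_of_eq_zero (hP.eq_zero u) 1

end SymmetricWalk

section PairedProcess

variable {V : Type*} [Fintype V] [DecidableEq V] (G : SimpleGraph V) [DecidableRel G.Adj]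
  (P : Matrix V V ℝ)

/-- A meeting-time solution is an `m` with `pairRate G P x y * m x y = 1 + pairJumpSum G P m x y`
for `x ≠ y`: from `(x, y)` the pair moves to `(i, y)` at rate `P x i`, to `(x, j)` at rate `P y j`,
and meets at rate `P x y`. -/
def pairRate (x y : V) : ℝ :=
  ∑ i ∈ G.neighborFinset x, P x i + ∑ j ∈ G.neighborFinset y, P y j - P x y

def pairJumpSum (h : V → V → ℝ) (x y : V) : ℝ :=
  ∑ i ∈ (G.neighborFinset x).erase y, P x i * h i y
    + ∑ j ∈ (G.neighborFinset y).erase x, P y j * h x j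

variable {G P}

lemma pairJumpSum_sub (h₁ h₂ : V → V → ℝ) (x y : V) :
    pairJumpSum G P (h₁ - h₂) x y = pairJumpSum G P h₁ x y - pairJumpSum G P h₂ x y := by
  simp only [pairJumpSum, Pi.sub_apply, mul_sub, sum_sub_distrib]
  ring

namespace IsSymmetricWalk

variable {x y : V}

lemma pairRate_eq (hP : IsSymmetricWalk G P) (hxy : x ≠ y) :
    pairRate G P x y = ∑ i ∈ (G.neighborFinset x).erase y, P x i
      + ∑ j ∈ (G.neighborFinset y).erase x, P y j + P x y := by
  by_cases hadj : G.Adj x y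
  · rw [pairRate, sum_erase_eq_sub (by simpa using hadj),
      sum_erase_eq_sub (by simpa using hadj.symm), hP.symm y x]
    ring
  · rw [pairRate, erase_eq_of_notMem (by simpa using hadj),
      erase_eq_of_notMem (by simpa [adj_comm] using hadj), hP.eq_zero x y hxy hadj]
    ring

lemma pairJumpSum_eq (hP : IsSymmetricWalk G P) (hxy : x ≠ y) (h : V → V → ℝ) :
    pairJumpSum G P h x y = ∑ i ∈ G.neighborFinset x, P x i * h i y
      + ∑ j ∈ G.neighborFinset y, P y j * h x j - P x y * (h y y + h x x) := by
  by_cases hadj : G.Adj x y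
  · rw [pairJumpSum, sum_erase_eq_sub (by simpa using hadj),
      sum_erase_eq_sub (by simpa using hadj.symm), hP.symm y x]
    ring
  · rw [pairJumpSum, erase_eq_of_notMem (by simpa using hadj),
      erase_eq_of_notMem (by simpa [adj_comm] using hadj), hP.eq_zero x y hxy hadj]
    ring

lemma not_adj_and_forall_eq_of_max (hP : IsSymmetricWalk G P) {h : V → V → ℝ} {H : ℝ}
    (hH : 0 < H) (hle : ∀ u v, u ≠ v → h u v ≤ H) (hxy : x ≠ y) (hmax : h x y = H)
    (hsub : pairRate G P x y * h x y ≤ pairJumpSum G P h x y) :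
    ¬G.Adj x y ∧ ∀ i ∈ G.neighborFinset x, h i y = H := by
  set A := ∑ i ∈ (G.neighborFinset x).erase y, P x i * (H - h i y)
  set B := ∑ j ∈ (G.neighborFinset y).erase x, P y j * (H - h x j)
  have hA : ∀ i ∈ (G.neighborFinset x).erase y, 0 ≤ P x i * (H - h i y) := fun i hi =>
    mul_nonneg (hP.nonneg (G.ne_of_adj ((G.mem_neighborFinset x i).mp (mem_of_mem_erase hi))))
      (sub_nonneg.mpr (hle i y (ne_of_mem_erase hi)))
  have hB : ∀ j ∈ (G.neighborFinset y).erase x, 0 ≤ P y j * (H - h x j) := fun j hj =>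
    mul_nonneg (hP.nonneg (G.ne_of_adj ((G.mem_neighborFinset y j).mp (mem_of_mem_erase hj))))
      (sub_nonneg.mpr (hle x j (ne_of_mem_erase hj).symm))
  have hslack : A + B + P x y * H ≤ 0 := by
    rw [hP.pairRate_eq hxy, hmax] at hsub
    simp only [A, B, pairJumpSum, mul_sub, sum_sub_distrib, ← sum_mul] at hsub ⊢
    linarith
  have hnadj : ¬G.Adj x y := fun hadj => by
    nlinarith [sum_nonneg hA, sum_nonneg hB, mul_pos (hP.pos x y hadj) hH]
  refine ⟨hnadj, fun i hi => ?_⟩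
  have hA0 : A = 0 := by
    rw [hP.eq_zero x y hxy hnadj, zero_mul] at hslack
    linarith [sum_nonneg hA, sum_nonneg hB]
  have hiy : i ≠ y := by rintro rfl; exact hnadj ((G.mem_neighborFinset x i).mp hi)
  have := (sum_eq_zero_iff_of_nonneg hA).mp hA0 i (mem_erase_of_ne_of_mem hiy hi)
  rcases mul_eq_zero.mp this with h0 | h0
  · exact absurd h0 (hP.pos x i ((G.mem_neighborFinset x i).mp hi)).ne'
  · linarith

/-- Maximum principle: an off-diagonal maximiser closest to the diagonal would have a neighbouring
maximiser even closer to it. -/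
lemma nonpos_of_pairRate_mul_le (hP : IsSymmetricWalk G P) (hconn : G.Connected)
    {h : V → V → ℝ} (hsub : ∀ x y, x ≠ y → pairRate G P x y * h x y ≤ pairJumpSum G P h x y)
    (hxy : x ≠ y) : h x y ≤ 0 := by
  by_contra! hpos
  set S : Finset (V × V) := {p | p.1 ≠ p.2}
  obtain ⟨p, hpS, hpmax⟩ := S.exists_max_image (fun p => h p.1 p.2) ⟨(x, y), by simpa [S]⟩
  set H := h p.1 p.2
  have hle : ∀ u w, u ≠ w → h u w ≤ H := fun u w huw => hpmax (u, w) (by simpa [S])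
  obtain ⟨⟨u, w⟩, hq, hqmin⟩ := ({q ∈ S | h q.1 q.2 = H} : Finset (V × V)).exists_min_image
    (fun q => G.dist q.1 q.2) ⟨p, mem_filter.mpr ⟨hpS, rfl⟩⟩
  simp only [S, mem_filter, mem_univ, true_and] at hq
  have hH : 0 < H := hpos.trans_le (hle x y hxy)
  obtain ⟨hnadj, hnbr⟩ := hP.not_adj_and_forall_eq_of_max hH hle hq.1 hq.2 (hsub u w hq.1)
  obtain ⟨v, huv, hlt⟩ := hconn.exists_adj_dist_lt hq.1
  have hvw : v ≠ w := by rintro rfl; exact hnadj huv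
  have := hqmin (v, w) (by simpa [S, hvw] using hnbr v (by simpa using huv))
  exact absurd this (not_le.mpr hlt)

lemma le_of_pairRate_mul_eq (hP : IsSymmetricWalk G P) (hconn : G.Connected)
    {m φ : V → V → ℝ}
    (hm : ∀ x y, x ≠ y → pairRate G P x y * m x y = 1 + pairJumpSum G P m x y)
    (hφ : ∀ x y, x ≠ y → 1 + pairJumpSum G P φ x y ≤ pairRate G P x y * φ x y)
    (hxy : x ≠ y) : m x y ≤ φ x y := by
  have := hP.nonpos_of_pairRate_mul_le hconn (h := m - φ) (fun u w huw => by
    rw [pairJumpSum_sub, Pi.sub_apply, Pi.sub_apply, mul_sub]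
    linarith [hm u w huw, hφ u w huw]) hxy
  simpa [sub_nonpos] using this

end IsSymmetricWalk

end PairedProcess

noncomputable section Laplacian

variable {V : Type*} [Fintype V]

def dirichletEnergy (P : Matrix V V ℝ) (f : V → ℝ) : ℝ :=
  (∑ u, ∑ v, P u v * (f u - f v) ^ 2) / 2

variable {G : SimpleGraph V} {P : Matrix V V ℝ}

lemma IsSymmetricWalk.mul_sq_sub_nonneg (hP : IsSymmetricWalk G P) (f : V → ℝ) (u v : V) :
    0 ≤ P u v * (f u - f v) ^ 2 := by
  rcases eq_or_ne u v with rfl | huv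
  · simp
  · exact mul_nonneg (hP.nonneg huv) (sq_nonneg _)

lemma IsSymmetricWalk.dirichletEnergy_nonneg (hP : IsSymmetricWalk G P) (f : V → ℝ) :
    0 ≤ dirichletEnergy P f :=
  div_nonneg (sum_nonneg fun u _ => sum_nonneg fun v _ => hP.mul_sq_sub_nonneg f u v) zero_le_two

lemma IsSymmetricWalk.eq_of_dirichletEnergy_eq_zero (hP : IsSymmetricWalk G P) {f : V → ℝ}
    (hf : dirichletEnergy P f = 0) {u v : V} (huv : G.Adj u v) : f u = f v := by
  have hterm : P u v * (f u - f v) ^ 2 ≤ P u v * 0 := calc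
    _ ≤ ∑ v', P u v' * (f u - f v') ^ 2 :=
      single_le_sum (fun v' _ => hP.mul_sq_sub_nonneg f u v') (mem_univ v)
    _ ≤ ∑ u', ∑ v', P u' v' * (f u' - f v') ^ 2 :=
      single_le_sum (fun u' _ => sum_nonneg fun v' _ => hP.mul_sq_sub_nonneg f u' v') (mem_univ u)
    _ = P u v * 0 := by rw [mul_zero]; simpa [dirichletEnergy] using hf
  have hsq := le_antisymm (le_of_mul_le_mul_left hterm (hP.pos u v huv)) (sq_nonneg _)
  exact sub_eq_zero.mp (pow_eq_zero_iff two_ne_zero |>.mp hsq)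

variable [DecidableEq V]

/-- `I - P + Π` with `Π` the projection onto constants; its inverse is the Kemeny–Snell
fundamental matrix of the walk (whose stationary law is uniform when `P` is symmetric). -/
def shiftedLaplacian (P : Matrix V V ℝ) : Matrix V V ℝ :=
  1 - P + (Fintype.card V : ℝ)⁻¹ • of fun _ _ => 1

def fundamentalMatrix (P : Matrix V V ℝ) : Matrix V V ℝ := (shiftedLaplacian P)⁻¹

lemma shiftedLaplacian_mulVec (f : V → ℝ) (u : V) :
    (shiftedLaplacian P *ᵥ f) u = f u - ∑ v, P u v * f v + (∑ v, f v) / Fintype.card V := by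
  simp only [shiftedLaplacian, mulVec, dotProduct, Matrix.sub_apply, Matrix.add_apply, one_apply,
    Matrix.smul_apply, of_apply, smul_eq_mul, mul_one, add_mul, sub_mul, ite_mul, one_mul, zero_mul,
    sum_add_distrib, sum_sub_distrib, sum_ite_eq, mem_univ, if_true, ← mul_sum]
  ring

lemma IsSymmetricWalk.dotProduct_shiftedLaplacian_mulVec (hP : IsSymmetricWalk G P)
    (f : V → ℝ) :
    f ⬝ᵥ (shiftedLaplacian P *ᵥ f)
      = dirichletEnergy P f + (∑ u, f u) ^ 2 / Fintype.card V := by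
  have hrow : ∑ u, ∑ v, P u v * f u ^ 2 = ∑ u, f u ^ 2 := by
    simp [← sum_mul, hP.sum_row]
  have hcol : ∑ u, ∑ v, P u v * f v ^ 2 = ∑ u, f u ^ 2 := by
    rw [sum_comm]
    simp [← sum_mul, hP.symm _ _, hP.sum_row]
  have hsq : ∑ u, ∑ v, P u v * (f u - f v) ^ 2
      = ∑ u, ∑ v, P u v * f u ^ 2 + ∑ u, ∑ v, P u v * f v ^ 2
        - 2 * ∑ u, f u * ∑ v, P u v * f v := by
    simp only [mul_sum, ← sum_add_distrib, ← sum_sub_distrib]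
    exact sum_congr rfl fun u _ => sum_congr rfl fun v _ => by ring
  simp only [dotProduct, shiftedLaplacian_mulVec, dirichletEnergy, hsq, hrow, hcol]
  simp only [mul_add, mul_sub, sum_add_distrib, sum_sub_distrib, ← sum_mul, ← sq]
  ring

lemma IsSymmetricWalk.posDef_shiftedLaplacian (hP : IsSymmetricWalk G P) (hconn : G.Connected) :
    (shiftedLaplacian P).PosDef := by
  refine .of_dotProduct_mulVec_pos ?_ fun f hf => ?_
  · refine isHermitian_iff_isSymm.mpr (IsSymm.ext fun u v => ?_)
    simp [shiftedLaplacian, one_apply, eq_comm, hP.symm u v]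
  rw [star_trivial, hP.dotProduct_shiftedLaplacian_mulVec]
  have hE := hP.dirichletEnergy_nonneg f
  have hmean : 0 ≤ (∑ u, f u) ^ 2 / Fintype.card V := by positivity
  refine (add_nonneg hE hmean).lt_of_ne fun h0 => hf ?_
  obtain ⟨u⟩ : Nonempty V := not_isEmpty_iff.mp fun _ => hf (Subsingleton.elim _ _)
  have hconst (v : V) : f v = f u := hconn.preconnected.eq_of_forall_adj
    (fun _ _ => hP.eq_of_dirichletEnergy_eq_zero (by linarith)) v u
  have hcard : (0 : ℝ) < Fintype.card V := by exact_mod_cast Fintype.card_pos_iff.mpr ⟨u⟩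
  have hu : f u = 0 := by
    rw [sum_congr rfl fun v _ => hconst v, sum_const, card_univ, nsmul_eq_mul,
      mul_pow, sq (Fintype.card V : ℝ), mul_assoc, mul_div_cancel_left₀ _ hcard.ne'] at h0
    have hsq : (Fintype.card V : ℝ) * f u ^ 2 = 0 :=
      le_antisymm (by linarith) (mul_nonneg hcard.le (sq_nonneg _))
    exact pow_eq_zero_iff two_ne_zero |>.mp ((mul_eq_zero.mp hsq).resolve_left hcard.ne')
  funext v
  rw [hconst v, hu, Pi.zero_apply]

end Laplacian

section FundamentalMatrix

variable {V : Type*} [Fintype V] [DecidableEq V] {P : Matrix V V ℝ}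

lemma shiftedLaplacian_mul_fundamentalMatrix (hA : (shiftedLaplacian P).PosDef) :
    shiftedLaplacian P * fundamentalMatrix P = 1 :=
  mul_nonsing_inv _ ((isUnit_iff_isUnit_det _).mp hA.isUnit)

lemma fundamentalMatrix_mul_shiftedLaplacian (hA : (shiftedLaplacian P).PosDef) :
    fundamentalMatrix P * shiftedLaplacian P = 1 :=
  nonsing_inv_mul _ ((isUnit_iff_isUnit_det _).mp hA.isUnit)

lemma fundamentalMatrix_symm (hA : (shiftedLaplacian P).PosDef) (u v : V) :
    fundamentalMatrix P u v = fundamentalMatrix P v u :=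
  (isHermitian_iff_isSymm.mp hA.inv.isHermitian).apply v u

lemma fundamentalMatrix_diag_nonneg (hA : (shiftedLaplacian P).PosDef) (u : V) :
    0 ≤ fundamentalMatrix P u u :=
  hA.inv.diag_pos.le

variable {G : SimpleGraph V}

lemma IsSymmetricWalk.sum_fundamentalMatrix (hP : IsSymmetricWalk G P)
    (hA : (shiftedLaplacian P).PosDef) (u : V) : ∑ v, fundamentalMatrix P u v = 1 := by
  have : Nonempty V := ⟨u⟩
  have hone : shiftedLaplacian P *ᵥ (fun _ => 1) = fun _ => 1 := by
    ext v
    simp [shiftedLaplacian_mulVec, hP.sum_row]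
  calc ∑ v, fundamentalMatrix P u v = (fundamentalMatrix P *ᵥ fun _ => 1) u := by
        simp [mulVec, dotProduct]
    _ = 1 := by
        rw [← hone, mulVec_mulVec, fundamentalMatrix_mul_shiftedLaplacian hA, one_mulVec]

lemma IsSymmetricWalk.sum_mul_fundamentalMatrix (hP : IsSymmetricWalk G P)
    (hA : (shiftedLaplacian P).PosDef) (u v : V) :
    ∑ k, P u k * fundamentalMatrix P k v
      = fundamentalMatrix P u v + (Fintype.card V : ℝ)⁻¹ - if u = v then 1 else 0 := by
  have h := congrFun (congrFun (shiftedLaplacian_mul_fundamentalMatrix hA) u) v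
  have hcol : ∑ k, fundamentalMatrix P k v = 1 := by
    simpa [fundamentalMatrix_symm hA _ v] using hP.sum_fundamentalMatrix hA v
  simp only [shiftedLaplacian, mul_apply, Matrix.sub_apply, Matrix.add_apply, Matrix.smul_apply,
    of_apply, one_apply, smul_eq_mul, mul_one, add_mul, sub_mul, ite_mul, one_mul, zero_mul,
    sum_add_distrib, sum_sub_distrib, sum_ite_eq, mem_univ, if_true, ← mul_sum, hcol] at h
  linarith

lemma fundamentalMatrix_add_sub_two_mul_le (hA : (shiftedLaplacian P).PosDef) {c : ℝ}
    (hc : ∀ (f : V → ℝ) x y, 2 * (f x - f y) ≤ f ⬝ᵥ (shiftedLaplacian P *ᵥ f) + c) (x y : V) :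
    fundamentalMatrix P x x + fundamentalMatrix P y y - 2 * fundamentalMatrix P x y ≤ c := by
  set e : V → ℝ := Pi.single x 1 - Pi.single y 1
  set f := fundamentalMatrix P *ᵥ e
  have hAf : shiftedLaplacian P *ᵥ f = e := by
    rw [mulVec_mulVec, shiftedLaplacian_mul_fundamentalMatrix hA, one_mulVec]
  have hfe : f ⬝ᵥ e = f x - f y := by simp [e, dotProduct_sub]
  have hf : f x - f y
      = fundamentalMatrix P x x + fundamentalMatrix P y y - 2 * fundamentalMatrix P x y := by
    simp only [f, e, mulVec_sub, mulVec_single, MulOpposite.op_one, one_smul, Pi.sub_apply,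
      col_apply, fundamentalMatrix_symm hA y x]
    ring
  have := hc f x y
  rw [hAf, hfe] at this
  linarith

lemma IsSymmetricWalk.fundamentalMatrix_diag_le (hP : IsSymmetricWalk G P)
    (hA : (shiftedLaplacian P).PosDef) {c : ℝ}
    (hc : ∀ x y,
      fundamentalMatrix P x x + fundamentalMatrix P y y - 2 * fundamentalMatrix P x y ≤ c)
    (x : V) : fundamentalMatrix P x x ≤ c + 2 / Fintype.card V := by
  have hcard : (0 : ℝ) < Fintype.card V := by exact_mod_cast Fintype.card_pos_iff.mpr ⟨x⟩
  have hsum := sum_le_sum fun y (_ : y ∈ univ) => hc x y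
  simp only [sum_add_distrib, sum_sub_distrib, sum_const, card_univ, nsmul_eq_mul, ← mul_sum,
    hP.sum_fundamentalMatrix hA x] at hsum
  have htrace := sum_nonneg fun y (_ : y ∈ univ) => fundamentalMatrix_diag_nonneg hA y
  rw [add_div' _ _ _ hcard.ne', le_div_iff₀ hcard]
  linarith

end FundamentalMatrix

section PathEnergy

variable {V : Type*} [Fintype V] {G : SimpleGraph V} {P : Matrix V V ℝ}

lemma two_mul_le_mul_sq_add_inv {a : ℝ} (ha : 0 < a) (d : ℝ) : 2 * d ≤ a * d ^ 2 + a⁻¹ := by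
  have : a * d ^ 2 + a⁻¹ - 2 * d = (a * d - 1) ^ 2 / a := by field_simp; ring
  linarith [div_nonneg (sq_nonneg (a * d - 1)) ha.le]

/-- A path never traverses an edge twice, in either direction. -/
lemma IsSymmetricWalk.sum_walk_le_dirichletEnergy [DecidableEq V] (hP : IsSymmetricWalk G P)
    {x y : V} {w : G.Walk x y} (hw : w.IsPath) (f : V → ℝ) :
    ∑ t ∈ range w.length,
        P (w.getVert t) (w.getVert (t + 1)) * (f (w.getVert t) - f (w.getVert (t + 1))) ^ 2
      ≤ dirichletEnergy P f := by
  set g : V × V → ℝ := fun p => P p.1 p.2 * (f p.1 - f p.2) ^ 2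
  set s := (range w.length).image fun t => (w.getVert t, w.getVert (t + 1))
  have hinj {i j : ℕ} (hi : i ≤ w.length) (hj : j ≤ w.length) (h : w.getVert i = w.getVert j) :
      i = j :=
    hw.getVert_injOn hi hj h
  have hs : ∑ p ∈ s, g p = ∑ t ∈ range w.length, g (w.getVert t, w.getVert (t + 1)) :=
    sum_image fun i hi j hj h => by
      simp only [coe_range, Set.mem_Iio] at hi hj
      exact hinj hi.le hj.le (congrArg Prod.fst h)
  have hswap : ∑ p ∈ s.image Prod.swap, g p = ∑ p ∈ s, g p := by
    rw [sum_image fun p _ q _ h => Prod.swap_injective h]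
    refine sum_congr rfl fun p _ => ?_
    simp only [g, Prod.fst_swap, Prod.snd_swap, hP.symm p.2 p.1]
    ring
  have hdisj : Disjoint s (s.image Prod.swap) := by
    simp only [s, Finset.disjoint_left, mem_image, mem_range]
    rintro _ ⟨i, hi, rfl⟩ ⟨_, ⟨j, hj, rfl⟩, hji⟩
    simp only [Prod.swap_prod_mk, Prod.mk.injEq] at hji
    have h1 := hinj (by omega) (by omega) hji.1
    have h2 := hinj (by omega) (by omega) hji.2
    omega
  have hle : ∑ p ∈ s ∪ s.image Prod.swap, g p ≤ ∑ p : V × V, g p :=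
    sum_le_sum_of_subset_of_nonneg (subset_univ _) fun p _ _ => hP.mul_sq_sub_nonneg f p.1 p.2
  rw [sum_union hdisj, hswap, hs, Fintype.sum_prod_type] at hle
  rw [dirichletEnergy]
  linarith

lemma IsSymmetricWalk.two_mul_sub_le [DecidableEq V] (hP : IsSymmetricWalk G P)
    {x y : V} {w : G.Walk x y} (hw : w.IsPath) (f : V → ℝ) :
    2 * (f x - f y)
      ≤ dirichletEnergy P f + ∑ t ∈ range w.length, (P (w.getVert t) (w.getVert (t + 1)))⁻¹ := by
  have htel : f x - f y = ∑ t ∈ range w.length, (f (w.getVert t) - f (w.getVert (t + 1))) := by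
    rw [sum_range_sub' (fun t => f (w.getVert t)), w.getVert_zero, w.getVert_length]
  calc 2 * (f x - f y)
      = ∑ t ∈ range w.length, 2 * (f (w.getVert t) - f (w.getVert (t + 1))) := by
        rw [htel, mul_sum]
    _ ≤ ∑ t ∈ range w.length,
          (P (w.getVert t) (w.getVert (t + 1)) * (f (w.getVert t) - f (w.getVert (t + 1))) ^ 2
            + (P (w.getVert t) (w.getVert (t + 1)))⁻¹) :=
        sum_le_sum fun t ht => two_mul_le_mul_sq_add_inv
          (hP.pos _ _ (w.adj_getVert_succ (mem_range.mp ht))) _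
    _ ≤ _ := by
        rw [sum_add_distrib]
        gcongr
        exact hP.sum_walk_le_dirichletEnergy hw f

end PathEnergy

noncomputable section Supersolution

variable {V : Type*} [Fintype V] [DecidableEq V] {G : SimpleGraph V} [DecidableRel G.Adj]
  {P : Matrix V V ℝ}

def meetingSupersolution (P : Matrix V V ℝ) (K : ℝ) (x y : V) : ℝ :=
  Fintype.card V / 2 * (K - fundamentalMatrix P x y)

lemma meetingSupersolution_symm (hA : (shiftedLaplacian P).PosDef) (K : ℝ) (x y : V) :
    meetingSupersolution P K x y = meetingSupersolution P K y x := by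
  rw [meetingSupersolution, meetingSupersolution, fundamentalMatrix_symm hA]

lemma IsSymmetricWalk.sum_neighborFinset_mul_meetingSupersolution (hP : IsSymmetricWalk G P)
    (hA : (shiftedLaplacian P).PosDef) (K : ℝ) {x y : V} (hxy : x ≠ y) :
    ∑ i ∈ G.neighborFinset x, P x i * meetingSupersolution P K i y
      = (1 - P x x) * meetingSupersolution P K x y - 1 / 2 := by
  have : Nonempty V := ⟨x⟩
  have hcard : (Fintype.card V : ℝ) ≠ 0 := by exact_mod_cast Fintype.card_ne_zero (α := V)
  have hZ := hP.sum_mul_fundamentalMatrix hA x y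
  rw [if_neg hxy] at hZ
  rw [sum_neighborFinset_mul_of_eq_zero (hP.eq_zero x) fun i => meetingSupersolution P K i y]
  simp only [meetingSupersolution, mul_sub, sum_sub_distrib,
    mul_left_comm _ (Fintype.card V / 2 : ℝ), ← mul_sum, ← sum_mul, hP.sum_row, hZ]
  field_simp
  ring

/-- Each coordinate of the paired process contributes exactly `-1/2`, so what is left is the
meeting term `P x y * (φ x x + φ y y - φ x y)`, which `hK` makes nonnegative. -/
lemma IsSymmetricWalk.one_add_pairJumpSum_meetingSupersolution_le (hP : IsSymmetricWalk G P)
    (hA : (shiftedLaplacian P).PosDef) {K : ℝ}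
    (hK : ∀ x y, G.Adj x y →
      fundamentalMatrix P x x + fundamentalMatrix P y y - fundamentalMatrix P x y ≤ K)
    {x y : V} (hxy : x ≠ y) :
    1 + pairJumpSum G P (meetingSupersolution P K) x y
      ≤ pairRate G P x y * meetingSupersolution P K x y := by
  have hx := hP.sum_neighborFinset_mul_meetingSupersolution hA K hxy
  have hy : ∑ j ∈ G.neighborFinset y, P y j * meetingSupersolution P K x j
      = (1 - P y y) * meetingSupersolution P K x y - 1 / 2 := by
    rw [meetingSupersolution_symm hA K x y,
      ← hP.sum_neighborFinset_mul_meetingSupersolution hA K hxy.symm]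
    exact sum_congr rfl fun j _ => by rw [meetingSupersolution_symm hA K x j]
  have hmeet : P x y * (meetingSupersolution P K x y - meetingSupersolution P K y y
      - meetingSupersolution P K x x) ≤ 0 := by
    by_cases hadj : G.Adj x y
    · refine mul_nonpos_of_nonneg_of_nonpos (hP.pos x y hadj).le ?_
      have := hK x y hadj
      simp only [meetingSupersolution]
      nlinarith [(by positivity : (0 : ℝ) ≤ Fintype.card V / 2)]
    · rw [hP.eq_zero x y hxy hadj, zero_mul]
  rw [hP.pairJumpSum_eq hxy, pairRate, hx, hy, hP.sum_neighborFinset, hP.sum_neighborFinset]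
  linarith

end Supersolution

section BiasedWalk

variable {N : ℕ} {G : SimpleGraph (Fin N)} [DecidableRel G.Adj]

lemma PB_of_adj {i j : Fin N} (h : G.Adj i j) :
    PB G i j = 1 / (N : ℝ) * (1 / (G.degree i : ℝ) + 1 / (G.degree j : ℝ)) := by
  simp [PB, h.ne, h]

lemma PB_of_not_adj {i j : Fin N} (hne : i ≠ j) (h : ¬G.Adj i j) : PB G i j = 0 := by
  simp [PB, hne, h]

lemma PB_symm (i j : Fin N) : PB G i j = PB G j i := by
  rcases eq_or_ne i j with rfl | hne
  · rfl
  by_cases h : G.Adj i j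
  · rw [PB_of_adj h, PB_of_adj h.symm, add_comm]
  · rw [PB_of_not_adj hne h, PB_of_not_adj hne.symm (fun h' => h h'.symm)]

lemma inv_le_PB_of_adj {i j : Fin N} (h : G.Adj i j) :
    ((N : ℝ) * G.degree i)⁻¹ ≤ PB G i j := by
  have hj : (0 : ℝ) < G.degree j := by exact_mod_cast h.degree_pos_right
  rw [PB_of_adj h, mul_inv, ← one_div, ← one_div]
  gcongr
  exact le_add_of_nonneg_right (by positivity)

lemma PB_pos_of_adj {i j : Fin N} (h : G.Adj i j) : 0 < PB G i j := by
  have hN : (0 : ℝ) < N := by exact_mod_cast Fin.pos i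
  have hi : (0 : ℝ) < G.degree i := by exact_mod_cast h.degree_pos_left
  exact (inv_pos.mpr (mul_pos hN hi)).trans_le (inv_le_PB_of_adj h)

lemma inv_PB_le_of_adj {i j : Fin N} (h : G.Adj i j) : (PB G i j)⁻¹ ≤ N * G.degree i :=
  inv_le_of_inv_le₀ (mul_pos (by exact_mod_cast Fin.pos i) (by exact_mod_cast h.degree_pos_left))
    (inv_le_PB_of_adj h)

lemma sum_PB {x : Fin N} (hx : 0 < G.degree x) : ∑ j, PB G x j = 1 := by
  have hN : (N : ℝ) ≠ 0 := by exact_mod_cast (Fin.pos x).ne'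
  have hx' : (G.degree x : ℝ) ≠ 0 := by exact_mod_cast hx.ne'
  have hsplit := sum_neighborFinset_mul_of_eq_zero (G := G) (P := PB G) (u := x)
    (fun j hne hadj => PB_of_not_adj hne hadj) 1
  have hnbr : ∑ j ∈ G.neighborFinset x, PB G x j
      = 1 / N + ∑ k ∈ G.neighborFinset x, 1 / ((N : ℝ) * G.degree k) := by
    rw [sum_congr rfl fun j hj => PB_of_adj ((G.mem_neighborFinset x j).mp hj)]
    simp only [mul_add, sum_add_distrib, sum_const, card_neighborFinset_eq_degree, nsmul_eq_mul]
    congr 1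
    · field_simp
    · exact sum_congr rfl fun k _ => by rw [one_div_mul_one_div]
  have hdiag : PB G x x = 1 - 1 / N - ∑ k ∈ G.neighborFinset x, 1 / ((N : ℝ) * G.degree k) := by
    simp [PB]
  simp only [Pi.one_apply, mul_one] at hsplit
  linarith

lemma isSymmetricWalk_PB (hdeg : ∀ v, 0 < G.degree v) : IsSymmetricWalk G (PB G) where
  symm := PB_symm
  sum_row u := sum_PB (hdeg u)
  eq_zero _ _ := PB_of_not_adj
  pos _ _ := PB_pos_of_adj

lemma sum_inv_PB_le {x y : Fin N} {w : G.Walk x y} (hw : w.length = G.dist x y) :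
    ∑ t ∈ range w.length, (PB G (w.getVert t) (w.getVert (t + 1)))⁻¹ ≤ 3 * (N : ℝ) ^ 2 := calc
  _ ≤ ∑ t ∈ range w.length, (N : ℝ) * G.degree (w.getVert t) :=
      sum_le_sum fun t ht => inv_PB_le_of_adj (w.adj_getVert_succ (mem_range.mp ht))
  _ ≤ ∑ t ∈ range (w.length + 1), (N : ℝ) * G.degree (w.getVert t) :=
      sum_le_sum_of_subset_of_nonneg (range_subset_range.mpr (Nat.le_succ _))
        fun _ _ _ => by positivity
  _ = N * ((∑ t ∈ range (w.length + 1), G.degree (w.getVert t) : ℕ) : ℝ) := by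
      rw [Nat.cast_sum, mul_sum]
  _ ≤ N * ((3 * N : ℕ) : ℝ) := by
      gcongr
      simpa using w.sum_degree_getVert_le hw
  _ = 3 * (N : ℝ) ^ 2 := by push_cast; ring

lemma two_mul_sub_le_dotProduct_PB (hconn : G.Connected) (hdeg : ∀ v, 0 < G.degree v)
    (f : Fin N → ℝ) (x y : Fin N) :
    2 * (f x - f y) ≤ f ⬝ᵥ (shiftedLaplacian (PB G) *ᵥ f) + 3 * (N : ℝ) ^ 2 := by
  have hP := isSymmetricWalk_PB hdeg
  obtain ⟨w, hw⟩ := hconn.exists_walk_length_eq_dist x y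
  have hmean : 0 ≤ (∑ u, f u) ^ 2 / (Fintype.card (Fin N) : ℝ) := by positivity
  calc 2 * (f x - f y)
      ≤ dirichletEnergy (PB G) f
        + ∑ t ∈ range w.length, (PB G (w.getVert t) (w.getVert (t + 1)))⁻¹ :=
        hP.two_mul_sub_le (w.isPath_of_length_eq_dist hw) f
    _ ≤ _ := by
        rw [hP.dotProduct_shiftedLaplacian_mulVec]
        linarith [sum_inv_PB_le hw]

lemma fundamentalMatrix_PB_add_sub_two_mul_le (hconn : G.Connected)
    (hdeg : ∀ v, 0 < G.degree v) (x y : Fin N) :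
    fundamentalMatrix (PB G) x x + fundamentalMatrix (PB G) y y - 2 * fundamentalMatrix (PB G) x y
      ≤ 3 * (N : ℝ) ^ 2 :=
  fundamentalMatrix_add_sub_two_mul_le ((isSymmetricWalk_PB hdeg).posDef_shiftedLaplacian hconn)
    (two_mul_sub_le_dotProduct_PB hconn hdeg) x y

lemma fundamentalMatrix_PB_diag_le (hN : 2 ≤ N) (hconn : G.Connected)
    (hdeg : ∀ v, 0 < G.degree v) (x : Fin N) :
    fundamentalMatrix (PB G) x x ≤ 3 * (N : ℝ) ^ 2 + 1 := by
  have h := (isSymmetricWalk_PB hdeg).fundamentalMatrix_diag_le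
    ((isSymmetricWalk_PB hdeg).posDef_shiftedLaplacian hconn)
    (fundamentalMatrix_PB_add_sub_two_mul_le hconn hdeg) x
  have hN' : 2 / (N : ℝ) ≤ 1 := by
    rw [div_le_one (by positivity)]
    exact_mod_cast hN
  rw [Fintype.card_fin] at h
  linarith

lemma fundamentalMatrix_PB_add_sub_le (hN : 2 ≤ N) (hconn : G.Connected)
    (hdeg : ∀ v, 0 < G.degree v) (x y : Fin N) :
    fundamentalMatrix (PB G) x x + fundamentalMatrix (PB G) y y - fundamentalMatrix (PB G) x y
      ≤ 6 * (N : ℝ) ^ 2 := by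
  have hN1 : (1 : ℝ) ≤ (N : ℝ) ^ 2 := one_le_pow₀ (by exact_mod_cast (by omega : 1 ≤ N))
  linarith [fundamentalMatrix_PB_add_sub_two_mul_le hconn hdeg x y,
    fundamentalMatrix_PB_diag_le hN hconn hdeg x, fundamentalMatrix_PB_diag_le hN hconn hdeg y]

lemma meetingSupersolution_PB_lt (hconn : G.Connected) (hdeg : ∀ v, 0 < G.degree v)
    (x y : Fin N) : meetingSupersolution (PB G) (6 * (N : ℝ) ^ 2) x y < 12 * (N : ℝ) ^ 3 := by
  have hA := (isSymmetricWalk_PB hdeg).posDef_shiftedLaplacian hconn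
  have hN : (0 : ℝ) < N := by exact_mod_cast Fin.pos x
  have hZ : -fundamentalMatrix (PB G) x y ≤ 3 / 2 * (N : ℝ) ^ 2 := by
    linarith [fundamentalMatrix_PB_add_sub_two_mul_le hconn hdeg x y,
      fundamentalMatrix_diag_nonneg hA x, fundamentalMatrix_diag_nonneg hA y]
  simp only [meetingSupersolution, Fintype.card_fin]
  nlinarith [pow_pos hN 3]

end BiasedWalk

theorem meeting_time_lt_twelve_N_cubed_general {N : ℕ} (hN : 2 ≤ N)
    (G : SimpleGraph (Fin N)) [DecidableRel G.Adj] (hconn : G.Connected)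
    (m : Fin N → Fin N → ℝ)
    (hdiag : ∀ x, m x x = 0)
    (hm : ∀ x y, x ≠ y →
      ((∑ i ∈ G.neighborFinset x, PB G x i) + (∑ j ∈ G.neighborFinset y, PB G y j)
          - PB G x y) * m x y
        = 1 + (∑ i ∈ (G.neighborFinset x).erase y, PB G x i * m i y)
            + (∑ j ∈ (G.neighborFinset y).erase x, PB G y j * m x j)) :
    ∀ x y, m x y < 12 * (N : ℝ) ^ 3 := by
  have hdeg (v : Fin N) : 0 < G.degree v :=
    haveI := Fin.nontrivial_iff_two_le.mpr hN
    hconn.preconnected.degree_pos_of_nontrivial v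
  have hP := isSymmetricWalk_PB hdeg
  intro x y
  rcases eq_or_ne x y with rfl | hxy
  · rw [hdiag]
    positivity
  calc m x y ≤ meetingSupersolution (PB G) (6 * (N : ℝ) ^ 2) x y :=
        hP.le_of_pairRate_mul_eq hconn (fun u v huv => (hm u v huv).trans (add_assoc _ _ _))
          (fun u v huv => hP.one_add_pairJumpSum_meetingSupersolution_le
            (hP.posDef_shiftedLaplacian hconn)
            (fun u v _ => fundamentalMatrix_PB_add_sub_le hN hconn hdeg u v) huv) hxy
    _ < 12 * (N : ℝ) ^ 3 := meetingSupersolution_PB_lt hconn hdeg x y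

/-- for a connected simple graph on `N ≥ 2` vertices, any meeting-time
solution `m` for the paired process `X` satisfies `m x y < 12 N³` for all vertices. -/
theorem meeting_time_lt_twelve_N_cubed {N : ℕ} (hN : 2 ≤ N)
    (G : SimpleGraph (Fin N)) [DecidableRel G.Adj] (hconn : G.Connected)
    (m : Fin N → Fin N → ℝ)
    (hsym : ∀ x y, m x y = m y x) (hdiag : ∀ x, m x x = 0)
    (hm : ∀ x y, x ≠ y →
      ((∑ i ∈ G.neighborFinset x, PB G x i) + (∑ j ∈ G.neighborFinset y, PB G y j)
          - PB G x y) * m x y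
        = 1 + (∑ i ∈ (G.neighborFinset x).erase y, PB G x i * m i y)
            + (∑ j ∈ (G.neighborFinset y).erase x, PB G y j * m x j)) :
    ∀ x y, m x y < 12 * (N : ℝ) ^ 3 :=
  meeting_time_lt_twelve_N_cubed_general hN G hconn m hdiag hm
end
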